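/- arXiv:2602.05225 — 4 statements merged into one kernel-verified Lean document; each statement's English description precedes it below -/
import Mathlib

section
/- Let (Y, ρ) be a separable metric space, μ a Borel probability measure on Y with support S, and ℓ : Y × Y → [0, ∞) a measurable loss function such that ℓ(y, y') ≤ L for all y, y' ∈ Y, |ℓ(y, y') − ℓ(y, y'')| ≤ c·ℓ(y', y'') for all y, y', y'' ∈ Y and a finite constant c, and ℓ(y, y') ≤ ρ(y, y')^α for some α > 0. Let Y₁, Y₂, … and Y'₁, Y'₂, … be i.i.d. random elements with distribution μ, and define the risk R(y) = E[ℓ(Y₁, y)]. Assume there exists a Fréchet mean m̄_Fr ∈ Y minimizing R over Y, and that m̄_Fr ∈ S. For each n, let m̄_n be any element of {Y'₁, …, Y'ₙ} minimizing y ↦ Σ_{i=1}^n ℓ(Y_i, y) over {Y'₁, …, Y'ₙ}. Then R(m̄_n) → R(m̄_Fr) almost surely as n → ∞. -/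
/-!
Fix `ε > 0`. By (tr) and (lr), every candidate `y'` close enough to `m̄_Fr` satisfies
`ℓ(z, y') ≤ ℓ(z, m̄_Fr) + ε` for all `z`, and since `m̄_Fr` lies in the support, almost surely
some `Y'_{i₀}` is such a candidate. For `n > i₀`, minimality of `m̄ₙ` and the strong law at
`m̄_Fr` bound its empirical risk by `R(m̄_Fr) + 2ε`. To pass from empirical to true risk at
the random point `m̄ₙ = Y'ᵢ`, note that `Y'ᵢ` is independent of `Y₁, …, Yₙ`: conditioning on
it and applying Hoeffding's inequality bounds each of the `n` deviation events by `rⁿ` with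
`r < 1`, so Borel–Cantelli makes all of them eventually fail.
-/

open MeasureTheory ProbabilityTheory Filter

open scoped ENNReal Topology

/-- The support of a Borel measure on a metric space: the set of points all of whose
open balls have positive measure. On a separable metric space this is the smallest
closed set of full measure. -/
def measureSupport {Y : Type*} [MetricSpace Y] [MeasurableSpace Y]
    (μ : Measure Y) : Set Y :=
  {y | ∀ ε : ℝ, 0 < ε → 0 < μ (Metric.ball y ε)}

section Probability

variable {Ω Y : Type*} [MeasurableSpace Ω] [MeasurableSpace Y] {P : Measure Ω} {μ : Measure Y}

lemma measure_preimage_prodMk_le_of_indepFun [IsProbabilityMeasure P] {β : Type*}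
    [MeasurableSpace β] {X : Ω → Y} {V : Ω → β} (hXV : IndepFun X V P) (hX : Measurable X)
    (hV : Measurable V) {A : Set (Y × β)} (hA : MeasurableSet A) {b : ℝ≥0∞}
    (hb : ∀ y, P (V ⁻¹' (Prod.mk y ⁻¹' A)) ≤ b) :
    P ((fun ω => (X ω, V ω)) ⁻¹' A) ≤ b := by
  rw [← Measure.map_apply (hX.prodMk hV) hA,
    (indepFun_iff_map_prod_eq_prod_map_map hX.aemeasurable hV.aemeasurable).1 hXV,
    Measure.prod_apply hA]
  calc ∫⁻ y, P.map V (Prod.mk y ⁻¹' A) ∂P.map X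
      ≤ ∫⁻ _, b ∂P.map X := lintegral_mono fun y => by
        rw [Measure.map_apply hV (measurable_prodMk_left hA)]; exact hb y
    _ = b := by simp [Measure.isProbabilityMeasure_map hX.aemeasurable]

lemma ProbabilityTheory.iIndepFun.indepFun_sumElim_inr [IsProbabilityMeasure P]
    {f g : ℕ → Ω → Y} (h : iIndepFun (Sum.elim f g) P) (hf : ∀ j, Measurable (f j))
    (hg : ∀ j, Measurable (g j)) (i n : ℕ) :
    IndepFun (g i) (fun ω (j : Fin n) => f j ω) P := by
  have hfg : ∀ k, Measurable (Sum.elim f g k) := by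
    rintro (j | j)
    exacts [hf j, hg j]
  have hST : Disjoint ({Sum.inr i} : Finset (ℕ ⊕ ℕ)) ((Finset.range n).map .inl) := by
    simp
  exact (h.indepFun_finset _ _ hST hfg).comp
    (measurable_pi_apply (⟨Sum.inr i, by simp⟩ : ({Sum.inr i} : Finset (ℕ ⊕ ℕ))))
    (measurable_pi_lambda (fun v (j : Fin n) => v ⟨Sum.inl j, by simp⟩)
      fun j => measurable_pi_apply _)

variable {X : ℕ → Ω → Y}

lemma measureReal_le_sum_integral_sub_le [IsProbabilityMeasure P] (hindep : iIndepFun X P)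
    (hX : ∀ j, Measurable (X j)) (hlaw : ∀ j, P.map (X j) = μ) {f : Y → ℝ}
    (hf : Measurable f) {L : ℝ} (hfL : ∀ y, f y ∈ Set.Icc 0 L) (n : ℕ) {ε : ℝ}
    (hε : 0 ≤ ε) :
    P.real {ω | n * ε ≤ ∑ j ∈ Finset.range n, (∫ y, f y ∂μ - f (X j ω))}
      ≤ Real.exp (-(2 * ε ^ 2 / L ^ 2)) ^ n := by
  have hmean : ∀ j, P[fun ω => -f (X j ω)] = -∫ y, f y ∂μ := fun j => by
    rw [← hlaw j, integral_neg, integral_map (hX j).aemeasurable hf.aestronglyMeasurable]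
  have hsubG : ∀ j,
      HasSubgaussianMGF (fun ω => ∫ y, f y ∂μ - f (X j ω)) ((‖L‖₊ / 2) ^ 2) P := fun j => by
    simpa [hmean, neg_add_eq_sub] using hasSubgaussianMGF_of_mem_Icc (μ := P) (a := -L) (b := 0)
      (hf.comp (hX j)).neg.aemeasurable
      (ae_of_all _ fun ω => ⟨neg_le_neg (hfL (X j ω)).2, neg_nonpos.2 (hfL (X j ω)).1⟩)
  have hoeffding := HasSubgaussianMGF.measure_sum_range_ge_le_of_iIndepFun (n := n)
    (hindep.comp (fun _ y => ∫ y, f y ∂μ - f y) fun _ => measurable_const.sub hf)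
    (fun j _ => hsubG j) (mul_nonneg n.cast_nonneg hε)
  refine hoeffding.trans_eq ?_
  rw [← Real.exp_nat_mul]
  congr 1
  rcases n.eq_zero_or_pos with rfl | hn
  · simp
  · push_cast
    rw [Real.norm_eq_abs, div_pow, sq_abs]
    field_simp

lemma ae_tendsto_average_comp (hindep : iIndepFun X P) (hX : ∀ j, Measurable (X j))
    (hlaw : ∀ j, P.map (X j) = μ) {f : Y → ℝ} (hf : Measurable f) (hfi : Integrable f μ) :
    ∀ᵐ ω ∂P, Tendsto (fun n : ℕ => (n : ℝ)⁻¹ • ∑ j ∈ Finset.range n, f (X j ω))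
      atTop (𝓝 (∫ y, f y ∂μ)) := by
  have hmean : P[fun ω => f (X 0 ω)] = ∫ y, f y ∂μ := by
    rw [← hlaw 0, integral_map (hX 0).aemeasurable hf.aestronglyMeasurable]
  have hint : Integrable (fun ω => f (X 0 ω)) P := by
    rw [← hlaw 0] at hfi
    exact hfi.comp_measurable (hX 0)
  have hident : ∀ j, IdentDistrib (fun ω => f (X j ω)) (fun ω => f (X 0 ω)) P P := fun j =>
    IdentDistrib.comp ⟨(hX j).aemeasurable, (hX 0).aemeasurable, by rw [hlaw, hlaw]⟩ hf
  simpa only [hmean] using strong_law_ae (fun j ω => f (X j ω)) hint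
    (fun i j hij => (hindep.indepFun hij).comp hf hf) hident

lemma ae_exists_mem_of_measure_pos [IsFiniteMeasure μ] (hindep : iIndepFun X P)
    (hX : ∀ j, Measurable (X j)) (hlaw : ∀ j, P.map (X j) = μ) {B : Set Y}
    (hB : MeasurableSet B) (hμB : 0 < μ B) : ∀ᵐ ω ∂P, ∃ i, X i ω ∈ B := by
  filter_upwards [ae_tendsto_average_comp hindep hX hlaw (measurable_const.indicator hB)
    ((integrable_const (1 : ℝ)).indicator hB)] with ω hω
  by_contra! hmiss
  have hzero : ∫ y, B.indicator (fun _ => (1 : ℝ)) y ∂μ = 0 :=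
    tendsto_nhds_unique hω (by simp [Set.indicator_of_notMem (hmiss _)])
  rw [integral_indicator_const _ hB] at hzero
  simp [Measure.real, ENNReal.toReal_eq_zero_iff, hμB.ne', measure_ne_top] at hzero

lemma ae_tendsto_of_forall_ae_eventually_lt {f : ℕ → Ω → ℝ} {a : ℝ}
    (hlow : ∀ n ω, a ≤ f n ω) (hup : ∀ ε > 0, ∀ᵐ ω ∂P, ∀ᶠ n in atTop, f n ω < a + ε) :
    ∀ᵐ ω ∂P, Tendsto (fun n => f n ω) atTop (𝓝 a) := by
  have hup' : ∀ᵐ ω ∂P, ∀ k : ℕ, ∀ᶠ n in atTop, f n ω < a + 1 / (k + 1) :=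
    ae_all_iff.2 fun k => hup _ Nat.one_div_pos_of_nat
  filter_upwards [hup'] with ω hω
  refine tendsto_order.2 ⟨fun b hb => .of_forall fun n => hb.trans_le (hlow n ω), fun b hb => ?_⟩
  obtain ⟨k, hk⟩ := exists_nat_one_div_lt (sub_pos.2 hb)
  exact (hω k).mono fun n hn => by linarith

end Probability

section Loss

variable {Ω Y : Type*} [MeasurableSpace Ω] [MeasurableSpace Y] {P : Measure Ω}
  [IsProbabilityMeasure P] {μ : Measure Y} [IsProbabilityMeasure μ] {ℓ : Y → Y → ℝ} {L : ℝ}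
  {Ys Ys' : ℕ → Ω → Y}

lemma measure_le_sum_integral_sub_loss_le (hindep : iIndepFun (Sum.elim Ys Ys') P)
    (hYs : ∀ j, Measurable (Ys j)) (hYs' : ∀ j, Measurable (Ys' j))
    (hlaw : ∀ j, P.map (Ys j) = μ) (hℓ : Measurable fun p : Y × Y => ℓ p.1 p.2)
    (hℓL : ∀ y y', ℓ y y' ∈ Set.Icc 0 L) (n i : ℕ) {ε : ℝ} (hε : 0 ≤ ε) :
    P {ω | n * ε ≤ ∑ j ∈ Finset.range n, (∫ z, ℓ z (Ys' i ω) ∂μ - ℓ (Ys j ω) (Ys' i ω))}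
      ≤ .ofReal (Real.exp (-(2 * ε ^ 2 / L ^ 2)) ^ n) := by
  have hR : Measurable fun y => ∫ z, ℓ z y ∂μ :=
    (StronglyMeasurable.integral_prod_left (f := ℓ) hℓ.stronglyMeasurable).measurable
  set A : Set (Y × (Fin n → Y)) := {q | n * ε ≤ ∑ j : Fin n, (∫ z, ℓ z q.1 ∂μ - ℓ (q.2 j) q.1)}
  have hA : MeasurableSet A := measurableSet_le measurable_const <|
    Finset.measurable_sum _ fun j _ => (hR.comp measurable_fst).sub <|
      hℓ.comp (f := fun q : Y × (Fin n → Y) => (q.2 j, q.1)) (by fun_prop)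
  have hV : Measurable fun ω (j : Fin n) => Ys j ω := measurable_pi_lambda _ fun j => hYs j
  have hsection : ∀ y, P ((fun ω (j : Fin n) => Ys j ω) ⁻¹' (Prod.mk y ⁻¹' A))
      ≤ .ofReal (Real.exp (-(2 * ε ^ 2 / L ^ 2)) ^ n) := fun y => by
    have hset : (fun ω (j : Fin n) => Ys j ω) ⁻¹' (Prod.mk y ⁻¹' A)
        = {ω | n * ε ≤ ∑ j ∈ Finset.range n, (∫ z, ℓ z y ∂μ - ℓ (Ys j ω) y)} := by
      ext ω
      simp only [A, Set.mem_preimage, Set.mem_ofPred_eq,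
        Fin.sum_univ_eq_sum_range (fun j => ∫ z, ℓ z y ∂μ - ℓ (Ys j ω) y)]
    rw [hset]
    refine (ENNReal.le_ofReal_iff_toReal_le (measure_ne_top _ _) (by positivity)).2 ?_
    exact measureReal_le_sum_integral_sub_le (hindep.precomp (g := Sum.inl) Sum.inl_injective)
      hYs hlaw (hℓ.comp (measurable_id.prodMk measurable_const)) (fun z => hℓL z y) n hε
  convert measure_preimage_prodMk_le_of_indepFun (hindep.indepFun_sumElim_inr hYs hYs' i n)
    (hYs' i) hV hA hsection using 2
  ext ω
  simp only [A, Set.mem_preimage, Set.mem_ofPred_eq,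
    Fin.sum_univ_eq_sum_range (fun j => ∫ z, ℓ z (Ys' i ω) ∂μ - ℓ (Ys j ω) (Ys' i ω))]

lemma ae_eventually_forall_sum_integral_sub_loss_lt (hindep : iIndepFun (Sum.elim Ys Ys') P)
    (hYs : ∀ j, Measurable (Ys j)) (hYs' : ∀ j, Measurable (Ys' j))
    (hlaw : ∀ j, P.map (Ys j) = μ) (hℓ : Measurable fun p : Y × Y => ℓ p.1 p.2)
    (hL : 0 < L) (hℓL : ∀ y y', ℓ y y' ∈ Set.Icc 0 L) {ε : ℝ} (hε : 0 < ε) :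
    ∀ᵐ ω ∂P, ∀ᶠ n in atTop, ∀ i < n,
      ∑ j ∈ Finset.range n, (∫ z, ℓ z (Ys' i ω) ∂μ - ℓ (Ys j ω) (Ys' i ω)) < n * ε := by
  set r := Real.exp (-(2 * ε ^ 2 / L ^ 2))
  have hr : ‖r‖ < 1 := by
    rw [Real.norm_of_nonneg (Real.exp_nonneg _), Real.exp_lt_one_iff, neg_lt_zero]
    positivity
  set E : ℕ → Set Ω := fun n => ⋃ i ∈ Finset.range n,
    {ω | n * ε ≤ ∑ j ∈ Finset.range n, (∫ z, ℓ z (Ys' i ω) ∂μ - ℓ (Ys j ω) (Ys' i ω))}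
  have hE : ∀ n, P (E n) ≤ .ofReal (n * r ^ n) := fun n => calc
    P (E n) ≤ ∑ _i ∈ Finset.range n, .ofReal (r ^ n) :=
      (measure_biUnion_finset_le _ _).trans <| Finset.sum_le_sum fun i _ =>
        measure_le_sum_integral_sub_loss_le hindep hYs hYs' hlaw hℓ hℓL n i hε.le
    _ = .ofReal (n * r ^ n) := by
      rw [Finset.sum_const, Finset.card_range, nsmul_eq_mul,
        ENNReal.ofReal_mul n.cast_nonneg, ENNReal.ofReal_natCast]
  have hsum : ∑' n, P (E n) ≠ ∞ := ne_top_of_le_ne_top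
    (by simpa using (summable_pow_mul_geometric_of_norm_lt_one 1 hr).tsum_ofReal_ne_top)
    (ENNReal.tsum_le_tsum hE)
  filter_upwards [ae_eventually_notMem hsum] with ω hω
  exact hω.mono fun n hn i hi => not_le.1 fun h => hn (Set.mem_biUnion (Finset.mem_range.2 hi) h)

end Loss

lemma exists_ball_forall_loss_le_add {Y : Type*} [PseudoMetricSpace Y] {ℓ : Y → Y → ℝ}
    (hℓ0 : ∀ y y', 0 ≤ ℓ y y') {c : ℝ} (htr : ∀ y y' y'', |ℓ y y' - ℓ y y''| ≤ c * ℓ y' y'')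
    {α : ℝ} (hα : 0 < α) (hlr : ∀ y y', ℓ y y' ≤ dist y y' ^ α) (m : Y) {ε : ℝ}
    (hε : 0 < ε) :
    ∃ δ > 0, ∀ y' ∈ Metric.ball m δ, ∀ z, ℓ z y' ≤ ℓ z m + ε := by
  have hcont : Tendsto (fun y' => |c| * dist y' m ^ α) (𝓝 m) (𝓝 0) := by
    have := (((continuous_id.dist (continuous_const (y := m))).rpow_const
      fun _ => Or.inr hα.le).const_mul |c|).tendsto m
    simpa [Real.zero_rpow hα.ne'] using this
  obtain ⟨δ, hδ, hball⟩ := Metric.eventually_nhds_iff.1 (hcont.eventually (gt_mem_nhds hε))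
  refine ⟨δ, hδ, fun y' hy' z => ?_⟩
  have hcℓ : c * ℓ y' m ≤ |c| * dist y' m ^ α :=
    (mul_le_mul_of_nonneg_right (le_abs_self c) (hℓ0 y' m)).trans
      (mul_le_mul_of_nonneg_left (hlr y' m) (abs_nonneg c))
  linarith [(abs_le.1 (htr z y' m)).2, hball hy']

lemma eventually_lt_add_of_empirical_minimizer {Y : Type*} {ℓ : Y → Y → ℝ} {R : Y → ℝ}
    {ys ys' mb : ℕ → Y} {m : Y} {ε : ℝ} (hε : 0 < ε)
    (hdev : ∀ᶠ n in atTop, ∀ i < n,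
      ∑ j ∈ Finset.range n, (R (ys' i) - ℓ (ys j) (ys' i)) < n * ε)
    (havg : Tendsto (fun n : ℕ => (n : ℝ)⁻¹ • ∑ j ∈ Finset.range n, ℓ (ys j) m)
      atTop (𝓝 (R m)))
    {i₀ : ℕ} (hi₀ : ∀ z, ℓ z (ys' i₀) ≤ ℓ z m + ε)
    (hmem : ∀ n, 0 < n → ∃ i < n, mb n = ys' i)
    (hmin : ∀ n, 0 < n → ∀ i < n,
      ∑ j ∈ Finset.range n, ℓ (ys j) (mb n) ≤ ∑ j ∈ Finset.range n, ℓ (ys j) (ys' i)) :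
    ∀ᶠ n in atTop, R (mb n) < R m + 3 * ε := by
  filter_upwards [hdev, havg.eventually (gt_mem_nhds (lt_add_of_pos_right _ hε)),
    eventually_gt_atTop i₀] with n hdev hn_avg hn
  have hn0 : 0 < n := by omega
  have hn0' : (0 : ℝ) < n := by exact_mod_cast hn0
  obtain ⟨i, hi, hmb⟩ := hmem n hn0
  have hrisk : n * R (mb n) < ∑ j ∈ Finset.range n, ℓ (ys j) (mb n) + n * ε := by
    have := hdev i hi
    rw [Finset.sum_sub_distrib, Finset.sum_const, Finset.card_range, nsmul_eq_mul] at this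
    rw [hmb]
    linarith
  have hnear : ∑ j ∈ Finset.range n, ℓ (ys j) (ys' i₀)
      ≤ ∑ j ∈ Finset.range n, ℓ (ys j) m + n * ε := calc
    _ ≤ ∑ j ∈ Finset.range n, (ℓ (ys j) m + ε) := Finset.sum_le_sum fun j _ => hi₀ _
    _ = _ := by rw [Finset.sum_add_distrib, Finset.sum_const, Finset.card_range, nsmul_eq_mul]
  have hslln : ∑ j ∈ Finset.range n, ℓ (ys j) m < n * (R m + ε) := by
    rwa [smul_eq_mul, inv_mul_lt_iff₀ hn0'] at hn_avg
  have : n * R (mb n) < n * (R m + 3 * ε) := by linarith [hmin n hn0 i₀ hn]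
  exact lt_of_mul_lt_mul_left this hn0'.le

theorem frechet_mean_estimator_strongly_consistent_general
    {Y : Type*} [MetricSpace Y]
    [MeasurableSpace Y] [BorelSpace Y]
    (μ : Measure Y) [IsProbabilityMeasure μ]
    {Ω : Type*} [MeasurableSpace Ω] (P : Measure Ω) [IsProbabilityMeasure P]
    (ℓ : Y → Y → ℝ) (hℓmeas : Measurable fun p : Y × Y => ℓ p.1 p.2)
    (hℓ0 : ∀ y y', 0 ≤ ℓ y y') (L : ℝ) (hℓL : ∀ y y', ℓ y y' ≤ L)
    (c : ℝ) (htr : ∀ y y' y'', |ℓ y y' - ℓ y y''| ≤ c * ℓ y' y'')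
    (α : ℝ) (hα : 0 < α) (hlr : ∀ y y', ℓ y y' ≤ dist y y' ^ α)
    -- the two i.i.d. sequences, jointly independent, with common distribution `μ`
    (Yseq Y'seq : ℕ → Ω → Y)
    (hYmeas : ∀ i, Measurable (Yseq i)) (hY'meas : ∀ i, Measurable (Y'seq i))
    (hYdist : ∀ i, Measure.map (Yseq i) P = μ)
    (hY'dist : ∀ i, Measure.map (Y'seq i) P = μ)
    (hindep : iIndepFun (Sum.elim Yseq Y'seq) P)
    -- the risk and the Fréchet mean
    (R : Y → ℝ) (hR : ∀ y, R y = ∫ z, ℓ z y ∂μ)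
    (mFr : Y) (hmFr : ∀ y : Y, R mFr ≤ R y)
    (hmFrS : mFr ∈ measureSupport μ)
    -- the estimator: an element of `{Y'₁, …, Y'ₙ}` minimizing the empirical risk there
    (mbar : ℕ → Ω → Y)
    (hmem : ∀ n (ω : Ω), 0 < n → ∃ i < n, mbar n ω = Y'seq i ω)
    (hminz : ∀ n (ω : Ω), 0 < n → ∀ i < n,
      ∑ j ∈ Finset.range n, ℓ (Yseq j ω) (mbar n ω)
        ≤ ∑ j ∈ Finset.range n, ℓ (Yseq j ω) (Y'seq i ω)) :
    ∀ᵐ ω ∂P, Tendsto (fun n => R (mbar n ω)) atTop (nhds (R mFr)) := by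
  obtain rfl : R = fun y => ∫ z, ℓ z y ∂μ := funext hR
  have hℓL' : ∀ y y', ℓ y y' ∈ Set.Icc 0 (max L 1) :=
    fun y y' => ⟨hℓ0 y y', (hℓL y y').trans (le_max_left _ _)⟩
  have hℓmFr : Measurable fun z => ℓ z mFr := hℓmeas.comp (measurable_id.prodMk measurable_const)
  have hYindep : iIndepFun Yseq P := hindep.precomp (g := Sum.inl) Sum.inl_injective
  have hY'indep : iIndepFun Y'seq P := hindep.precomp (g := Sum.inr) Sum.inr_injective
  refine ae_tendsto_of_forall_ae_eventually_lt (fun n ω => hmFr _) fun ε hε => ?_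
  obtain ⟨δ, hδ, hball⟩ := exists_ball_forall_loss_le_add hℓ0 htr hα hlr mFr (ε := ε / 3)
    (by positivity)
  filter_upwards [ae_eventually_forall_sum_integral_sub_loss_lt hindep hYmeas hY'meas hYdist
      hℓmeas (lt_max_of_lt_right one_pos) hℓL' (ε := ε / 3) (by positivity),
    ae_tendsto_average_comp hYindep hYmeas hYdist hℓmFr
      (.of_mem_Icc 0 (max L 1) hℓmFr.aemeasurable (ae_of_all _ fun z => hℓL' z mFr)),
    ae_exists_mem_of_measure_pos hY'indep hY'meas hY'dist
      Metric.isOpen_ball.measurableSet (hmFrS δ hδ)]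
    with ω hdev havg ⟨i₀, hi₀⟩
  have := eventually_lt_add_of_empirical_minimizer (R := fun y => ∫ z, ℓ z y ∂μ) (by positivity)
    hdev havg (hball _ hi₀) (hmem · ω) (hminz · ω)
  simpa only [mul_div_cancel₀ ε (three_ne_zero (α := ℝ))] using this

/-- **Theorem 1 of the paper.** Strong consistency of the quantized
Fréchet mean estimator: on a separable metric space, if the measurable loss `ℓ` is
nonnegative, bounded by `L`, satisfies conditions (tr) and (lr), the sequences
`Y₁, Y₂, …` and `Y'₁, Y'₂, …` are all i.i.d. with distribution `μ`, the risk
`R(y) = E[ℓ(Y₁, y)]` is minimized over `Y` at a Fréchet mean `m̄_Fr` belonging to the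
support of `μ`, and for each `n ≥ 1` the estimator `m̄ₙ` is an element of
`{Y'₁, …, Y'ₙ}` minimizing `y ↦ Σ_{i=1}^n ℓ(Yᵢ, y)` over `{Y'₁, …, Y'ₙ}`, then
`R(m̄ₙ) → R(m̄_Fr)` almost surely. -/
theorem frechet_mean_estimator_strongly_consistent
    {Y : Type*} [MetricSpace Y] [TopologicalSpace.SeparableSpace Y]
    [MeasurableSpace Y] [BorelSpace Y]
    (μ : Measure Y) [IsProbabilityMeasure μ]
    {Ω : Type*} [MeasurableSpace Ω] (P : Measure Ω) [IsProbabilityMeasure P]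
    (ℓ : Y → Y → ℝ) (hℓmeas : Measurable fun p : Y × Y => ℓ p.1 p.2)
    (hℓ0 : ∀ y y', 0 ≤ ℓ y y') (L : ℝ) (hℓL : ∀ y y', ℓ y y' ≤ L)
    (c : ℝ) (htr : ∀ y y' y'', |ℓ y y' - ℓ y y''| ≤ c * ℓ y' y'')
    (α : ℝ) (hα : 0 < α) (hlr : ∀ y y', ℓ y y' ≤ dist y y' ^ α)
    -- the two i.i.d. sequences, jointly independent, with common distribution `μ`
    (Yseq Y'seq : ℕ → Ω → Y)
    (hYmeas : ∀ i, Measurable (Yseq i)) (hY'meas : ∀ i, Measurable (Y'seq i))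
    (hYdist : ∀ i, Measure.map (Yseq i) P = μ)
    (hY'dist : ∀ i, Measure.map (Y'seq i) P = μ)
    (hindep : iIndepFun (Sum.elim Yseq Y'seq) P)
    -- the risk and the Fréchet mean
    (R : Y → ℝ) (hR : ∀ y, R y = ∫ z, ℓ z y ∂μ)
    (mFr : Y) (hmFr : ∀ y : Y, R mFr ≤ R y)
    (hmFrS : mFr ∈ measureSupport μ)
    -- the estimator: an element of `{Y'₁, …, Y'ₙ}` minimizing the empirical risk there
    (mbar : ℕ → Ω → Y)
    (hmem : ∀ n (ω : Ω), 0 < n → ∃ i < n, mbar n ω = Y'seq i ω)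
    (hminz : ∀ n (ω : Ω), 0 < n → ∀ i < n,
      ∑ j ∈ Finset.range n, ℓ (Yseq j ω) (mbar n ω)
        ≤ ∑ j ∈ Finset.range n, ℓ (Yseq j ω) (Y'seq i ω)) :
    ∀ᵐ ω ∂P, Tendsto (fun n => R (mbar n ω)) atTop (nhds (R mFr)) :=
  frechet_mean_estimator_strongly_consistent_general μ P ℓ hℓmeas hℓ0 L hℓL c htr α hα hlr Yseq
    Y'seq hYmeas hY'meas hYdist hY'dist hindep R hR mFr hmFr hmFrS mbar hmem hminz
end

section
/- Let (Y, ρ) be a separable metric space, ℓ : Y × Y → [0, ∞) measurable with ℓ(y, y') ≤ L for all y, y', and let Y₁, Y₂, … and Y'₁, Y'₂, … be two mutually independent i.i.d. sequences with common distribution μ. For y ∈ Y set R(y) = E[ℓ(Y₁, y)] and R_n(y) = (1/n)·Σ_{i=1}^n ℓ(Y_i, y). If for each n, m̄_n is an element of {Y'₁, …, Y'ₙ} minimizing R_n over {Y'₁, …, Y'ₙ}, then R(m̄_n) − min_{1 ≤ i ≤ n} R(Y'_i) → 0 almost surely as n → ∞. -/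
/-!
Conditionally on the candidate `Y'ⱼ`, which is independent of the sample `Y₁, …, Yₙ`, the
empirical risk `Rₙ(Y'ⱼ)` is a mean of `n` i.i.d. variables with values in `[0, L]`, so by
Hoeffding's inequality `|Rₙ(Y'ⱼ) - R(Y'ⱼ)| ≥ δ` has probability at most `2 exp (-2nδ²/L²)`.
A union bound over the `n` candidates leaves `2n exp (-2nδ²/L²)`, which is summable, so by
Borel–Cantelli `Dₙ = maxⱼ |Rₙ(Y'ⱼ) - R(Y'ⱼ)| → 0` almost surely. Finally, since `m̄ₙ`
minimizes `Rₙ` among the candidates, `0 ≤ R(m̄ₙ) - minⱼ R(Y'ⱼ) ≤ 2 Dₙ`.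
-/

open MeasureTheory ProbabilityTheory Filter Real Topology

theorem sub_inf'_le_two_mul_sup'_abs_sub {ι : Type*} {s : Finset ι} (hs : s.Nonempty)
    {f g : ι → ℝ} {a : ι} (ha : a ∈ s) (hmin : ∀ i ∈ s, g a ≤ g i) :
    f a - s.inf' hs f ≤ 2 * s.sup' hs fun i => |g i - f i| := by
  obtain ⟨i, hi, hfi⟩ := Finset.exists_mem_eq_inf' hs f
  have hdev : ∀ j ∈ s, |g j - f j| ≤ s.sup' hs fun i => |g i - f i| :=
    fun j hj => Finset.le_sup' (fun i => |g i - f i|) hj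
  have := abs_le.1 (hdev a ha)
  have := abs_le.1 (hdev i hi)
  linarith [hmin i hi]

theorem summable_succ_mul_two_mul_exp_neg {δ c : ℝ} (hδ : δ ≠ 0) (hc : 0 < c) :
    Summable fun n : ℕ => ((n + 1 : ℕ) : ℝ) * (2 * exp (-2 * ((n + 1 : ℕ) : ℝ) * δ ^ 2 / c)) := by
  have hr : 0 < 2 * δ ^ 2 / c := by positivity
  refine (summable_nat_add_iff 1).2 ((summable_pow_mul_exp_neg_nat_mul 1 hr).mul_left 2) |>.congr
    fun n => ?_
  simp only [pow_one]
  ring_nf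

section

variable {Ω Y : Type*} [MeasurableSpace Ω] [MeasurableSpace Y] {P : Measure Ω} {μ : Measure Y}

theorem measureReal_abs_sum_div_sub_integral_ge_le [IsProbabilityMeasure P]
    {Z : ℕ → Ω → Y} (hZ : ∀ i, Measurable (Z i)) (hindep : iIndepFun Z P)
    (hlaw : ∀ i, P.map (Z i) = μ) {f : Y → ℝ} (hf : Measurable f) {a b : ℝ}
    (hfab : ∀ y, f y ∈ Set.Icc a b) {n : ℕ} (hn : 0 < n) {ε : ℝ} (hε : 0 ≤ ε) :
    P.real {ω | ε ≤ |(∑ i ∈ Finset.range n, f (Z i ω)) / n - ∫ y, f y ∂μ|} ≤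
      2 * exp (-2 * n * ε ^ 2 / (b - a) ^ 2) := by
  set X : ℕ → Ω → ℝ := fun i ω => f (Z i ω) - ∫ y, f y ∂μ
  have hX : ∀ i, HasSubgaussianMGF (X i) ((‖b - a‖₊ / 2) ^ 2) P := fun i => by
    have hmean : ∫ ω, f (Z i ω) ∂P = ∫ y, f y ∂μ := by
      rw [← hlaw i, integral_map (hZ i).aemeasurable hf.aestronglyMeasurable]
    have := hasSubgaussianMGF_of_mem_Icc (hf.comp (hZ i)).aemeasurable
      (ae_of_all P fun ω => hfab (Z i ω))
    rwa [Function.comp_def, hmean] at this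
  have hXindep : iIndepFun X P := hindep.comp (fun _ y => f y - ∫ y, f y ∂μ) fun _ => hf.sub_const _
  have hn' : (0 : ℝ) < n := by exact_mod_cast hn
  have hsum : ∀ ω, (∑ i ∈ Finset.range n, f (Z i ω)) / n - ∫ y, f y ∂μ =
      (∑ i ∈ Finset.range n, X i ω) / n := fun ω => by
    simp only [X, Finset.sum_sub_distrib, Finset.sum_const, Finset.card_range, nsmul_eq_mul]
    field_simp
  have htail : ∀ {W : ℕ → Ω → ℝ}, iIndepFun W P →
      (∀ i, HasSubgaussianMGF (W i) ((‖b - a‖₊ / 2) ^ 2) P) →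
      P.real {ω | n * ε ≤ ∑ i ∈ Finset.range n, W i ω} ≤ exp (-2 * n * ε ^ 2 / (b - a) ^ 2) := by
    intro W hW hWsub
    refine (HasSubgaussianMGF.measure_sum_range_ge_le_of_iIndepFun hW (fun i _ => hWsub i)
      (by positivity)).trans_eq ?_
    congr 1
    simp only [NNReal.coe_pow, NNReal.coe_div, coe_nnnorm, Real.norm_eq_abs, NNReal.coe_ofNat,
      div_pow, sq_abs]
    field_simp
  calc P.real {ω | ε ≤ |(∑ i ∈ Finset.range n, f (Z i ω)) / n - ∫ y, f y ∂μ|}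
      ≤ P.real ({ω | n * ε ≤ ∑ i ∈ Finset.range n, X i ω} ∪
          {ω | n * ε ≤ ∑ i ∈ Finset.range n, (-X i) ω}) := by
        refine measureReal_mono (fun ω hω => ?_)
        simp only [Set.mem_union, Set.mem_ofPred_eq, hsum, abs_div, Nat.abs_cast,
          le_div_iff₀ hn', mul_comm ε, le_abs', Pi.neg_apply, Finset.sum_neg_distrib] at hω ⊢
        rcases hω with h | h
        · exact Or.inr (by linarith)
        · exact Or.inl h
    _ ≤ 2 * exp (-2 * n * ε ^ 2 / (b - a) ^ 2) := by
        rw [two_mul]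
        exact (measureReal_union_le _ _).trans (add_le_add (htail hXindep hX)
          (htail (hXindep.comp (fun _ => Neg.neg) fun _ => measurable_neg) fun i => (hX i).neg))

theorem measureReal_prodMk_mem_le_of_indepFun [IsProbabilityMeasure P] {α β : Type*}
    [MeasurableSpace α] [MeasurableSpace β] {W : Ω → α} {V : Ω → β} (hW : Measurable W)
    (hV : Measurable V) (hWV : IndepFun W V P) {S : Set (α × β)} (hS : MeasurableSet S) {c : ℝ}
    (hc : ∀ x, P.real {ω | (x, V ω) ∈ S} ≤ c) :
    P.real {ω | (W ω, V ω) ∈ S} ≤ c := by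
  obtain ⟨ω₀⟩ := nonempty_of_isProbabilityMeasure P
  have hc0 : 0 ≤ c := measureReal_nonneg.trans (hc (W ω₀))
  have hmap : P.map (fun ω => (W ω, V ω)) = (P.map W).prod (P.map V) :=
    (indepFun_iff_map_prod_eq_prod_map_map hW.aemeasurable hV.aemeasurable).mp hWV
  have hslice : ∀ x, P.map V (Prod.mk x ⁻¹' S) ≤ ENNReal.ofReal c := fun x => by
    rw [Measure.map_apply hV (measurable_prodMk_left hS), ← ofReal_measureReal]
    exact ENNReal.ofReal_le_ofReal (hc x)
  refine ENNReal.toReal_le_of_le_ofReal hc0 ?_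
  calc P {ω | (W ω, V ω) ∈ S} = (P.map W).prod (P.map V) S := by
        rw [← hmap, Measure.map_apply (hW.prodMk hV) hS]; rfl
    _ = ∫⁻ x, P.map V (Prod.mk x ⁻¹' S) ∂P.map W := Measure.prod_apply hS
    _ ≤ ∫⁻ _, ENNReal.ofReal c ∂P.map W := lintegral_mono hslice
    _ = ENNReal.ofReal c := by
        rw [lintegral_const, Measure.map_apply hW .univ, Set.preimage_univ, measure_univ, mul_one]

theorem measureReal_abs_sum_div_sub_integral_ge_le_of_indepFun [IsProbabilityMeasure P]
    {Y' : Type*} [MeasurableSpace Y'] {Z : ℕ → Ω → Y} (hZ : ∀ i, Measurable (Z i))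
    (hindep : iIndepFun Z P) (hlaw : ∀ i, P.map (Z i) = μ) {W : Ω → Y'} (hW : Measurable W)
    {n : ℕ} (hWZ : IndepFun W (fun ω (i : Fin n) => Z i ω) P) {g : Y → Y' → ℝ}
    (hg : Measurable (Function.uncurry g)) {a b : ℝ} (hgab : ∀ z y, g z y ∈ Set.Icc a b)
    (hn : 0 < n) {ε : ℝ} (hε : 0 ≤ ε) :
    P.real {ω | ε ≤ |(∑ i ∈ Finset.range n, g (Z i ω) (W ω)) / n - ∫ z, g z (W ω) ∂μ|} ≤
      2 * exp (-2 * n * ε ^ 2 / (b - a) ^ 2) := by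
  have : IsFiniteMeasure μ := hlaw 0 ▸ inferInstance
  set S : Set (Y' × (Fin n → Y)) :=
    {p | ε ≤ |(∑ i : Fin n, g (p.2 i) p.1) / n - ∫ z, g z p.1 ∂μ|}
  have hS : MeasurableSet S := by
    refine measurableSet_le measurable_const (Measurable.abs (Measurable.sub ?_ ?_))
    · exact (Finset.measurable_sum _ fun i _ =>
        hg.comp (((measurable_pi_apply i).comp measurable_snd).prodMk measurable_fst)).div_const _
    · exact (hg.stronglyMeasurable.integral_prod_left (μ := μ)).measurable.comp measurable_fst
  have hV : Measurable fun ω (i : Fin n) => Z i ω := measurable_pi_lambda _ fun i => hZ i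
  have key := measureReal_prodMk_mem_le_of_indepFun hW hV hWZ hS
    (c := 2 * exp (-2 * n * ε ^ 2 / (b - a) ^ 2)) fun y => by
      simpa [S, Finset.sum_range] using
        measureReal_abs_sum_div_sub_integral_ge_le hZ hindep hlaw (f := fun z => g z y)
          (hg.comp (measurable_id.prodMk measurable_const)) (fun z => hgab z y) hn hε
  simpa [S, Finset.sum_range] using key

theorem ProbabilityTheory.iIndepFun.indepFun_inr_finVec_inl {Z W : ℕ → Ω → Y}
    (hZ : ∀ i, Measurable (Z i)) (hW : ∀ j, Measurable (W j))
    (h : iIndepFun (Sum.elim Z W) P) (j n : ℕ) :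
    IndepFun (W j) (fun ω (i : Fin n) => Z i ω) P := by
  set S : Finset (ℕ ⊕ ℕ) := {Sum.inr j}
  set T : Finset (ℕ ⊕ ℕ) := (Finset.range n).map ⟨Sum.inl, Sum.inl_injective⟩
  have hST : Disjoint S T := by simp [S, T]
  exact (h.indepFun_finset S T hST (Sum.forall.2 ⟨hZ, hW⟩)).comp
    (measurable_pi_apply ⟨Sum.inr j, by simp [S]⟩)
    (measurable_pi_lambda _ fun i : Fin n => measurable_pi_apply ⟨Sum.inl i, by simp [T]⟩)

theorem measureReal_le_sup'_le_card_mul {ι : Type*} {s : Finset ι} (hs : s.Nonempty)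
    {X : ι → Ω → ℝ} {δ c : ℝ} (h : ∀ j ∈ s, P.real {ω | δ ≤ X j ω} ≤ c) :
    P.real {ω | δ ≤ s.sup' hs (X · ω)} ≤ s.card * c := by
  have hunion : {ω | δ ≤ s.sup' hs (X · ω)} = ⋃ j ∈ s, {ω | δ ≤ X j ω} := by
    ext ω; simp [Finset.le_sup'_iff]
  calc P.real {ω | δ ≤ s.sup' hs (X · ω)} ≤ ∑ j ∈ s, P.real {ω | δ ≤ X j ω} := by
        rw [hunion]; exact measureReal_biUnion_finset_le _ _
    _ ≤ s.card * c := by simpa using Finset.sum_le_sum h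

theorem ae_tendsto_zero_of_summable_measureReal_ge [IsFiniteMeasure P] {X : ℕ → Ω → ℝ}
    (hX : ∀ n ω, 0 ≤ X n ω) (h : ∀ δ > 0, Summable fun n => P.real {ω | δ ≤ X n ω}) :
    ∀ᵐ ω ∂P, Tendsto (X · ω) atTop (𝓝 0) := by
  have hBC : ∀ k : ℕ, ∀ᵐ ω ∂P, ∀ᶠ n in atTop, ω ∉ {ω | 1 / ((k : ℝ) + 1) ≤ X n ω} := fun k => by
    refine ae_eventually_notMem (ne_of_eq_of_ne ?_ (ENNReal.ofReal_ne_top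
      (r := ∑' n, P.real {ω | 1 / ((k : ℝ) + 1) ≤ X n ω})))
    rw [ENNReal.ofReal_tsum_of_nonneg (fun _ => measureReal_nonneg) (h _ (by positivity))]
    exact tsum_congr fun n => (ofReal_measureReal).symm
  filter_upwards [ae_all_iff.2 hBC] with ω hω
  refine Metric.tendsto_nhds.2 fun ε hε => ?_
  obtain ⟨k, hk⟩ := exists_nat_one_div_lt hε
  filter_upwards [hω k] with n hn
  rw [Real.dist_0_eq_abs, abs_of_nonneg (hX n ω)]
  exact (not_le.1 hn).trans hk

theorem ae_tendsto_sup'_abs_sum_div_sub_integral [IsProbabilityMeasure P] {Y' : Type*}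
    [MeasurableSpace Y'] {Z : ℕ → Ω → Y} (hZ : ∀ i, Measurable (Z i)) (hindep : iIndepFun Z P)
    (hlaw : ∀ i, P.map (Z i) = μ) {W : ℕ → Ω → Y'} (hW : ∀ j, Measurable (W j))
    (hWZ : ∀ j n, IndepFun (W j) (fun ω (i : Fin n) => Z i ω) P) {g : Y → Y' → ℝ}
    (hg : Measurable (Function.uncurry g)) {a b : ℝ} (hab : a < b)
    (hgab : ∀ z y, g z y ∈ Set.Icc a b) :
    ∀ᵐ ω ∂P, Tendsto (fun n => (Finset.range (n + 1)).sup' Finset.nonempty_range_add_one fun j =>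
      |(∑ i ∈ Finset.range (n + 1), g (Z i ω) (W j ω)) / (n + 1 : ℕ) - ∫ z, g z (W j ω) ∂μ|)
      atTop (𝓝 0) := by
  refine ae_tendsto_zero_of_summable_measureReal_ge
    (fun n ω => Finset.le_sup'_of_le _ (Finset.self_mem_range_succ n) (abs_nonneg _))
    fun δ hδ => ?_
  refine (summable_succ_mul_two_mul_exp_neg hδ.ne' (pow_pos (sub_pos.2 hab) 2)).of_nonneg_of_le
    (fun _ => measureReal_nonneg) fun n => ?_
  exact (measureReal_le_sup'_le_card_mul _ fun j _ =>
    measureReal_abs_sum_div_sub_integral_ge_le_of_indepFun hZ hindep hlaw (hW j) (hWZ j (n + 1))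
      hg hgab n.succ_pos hδ.le).trans_eq (by rw [Finset.card_range])

end

theorem estimation_error_tendsto_zero_general
    {Y : Type*} [MeasurableSpace Y] (μ : Measure Y)
    {Ω : Type*} [MeasurableSpace Ω] (P : Measure Ω) [IsProbabilityMeasure P]
    (ℓ : Y → Y → ℝ) (hℓmeas : Measurable fun p : Y × Y => ℓ p.1 p.2)
    (hℓ0 : ∀ y y', 0 ≤ ℓ y y') (L : ℝ) (hℓL : ∀ y y', ℓ y y' ≤ L)
    (Yseq Y'seq : ℕ → Ω → Y)
    (hYmeas : ∀ i, Measurable (Yseq i)) (hY'meas : ∀ i, Measurable (Y'seq i))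
    (hYdist : ∀ i, Measure.map (Yseq i) P = μ)
    (hindep : iIndepFun (Sum.elim Yseq Y'seq) P)
    (R : Y → ℝ) (hR : ∀ y, R y = ∫ z, ℓ z y ∂μ)
    (mbar : ℕ → Ω → Y)
    (hmem : ∀ n (ω : Ω), 0 < n → ∃ i < n, mbar n ω = Y'seq i ω)
    (hminz : ∀ n (ω : Ω), 0 < n → ∀ i < n,
      ∑ j ∈ Finset.range n, ℓ (Yseq j ω) (mbar n ω)
        ≤ ∑ j ∈ Finset.range n, ℓ (Yseq j ω) (Y'seq i ω)) :
    ∀ᵐ ω ∂P, Tendsto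
      (fun n => R (mbar (n + 1) ω) -
        (Finset.range (n + 1)).inf' Finset.nonempty_range_add_one fun i => R (Y'seq i ω))
      atTop (nhds 0) := by
  obtain rfl : R = fun y => ∫ z, ℓ z y ∂μ := funext hR
  -- `max L 1` rather than `L`: the Hoeffding rate is useless for a range of width `0`
  have hℓM : ∀ y y', ℓ y y' ∈ Set.Icc 0 (max L 1) :=
    fun y y' => ⟨hℓ0 y y', (hℓL y y').trans (le_max_left L 1)⟩
  have hYindep : iIndepFun Yseq P :=
    iIndepFun.precomp (f := Sum.elim Yseq Y'seq) Sum.inl_injective hindep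
  have hD := ae_tendsto_sup'_abs_sum_div_sub_integral hYmeas hYindep hYdist hY'meas
    (hindep.indepFun_inr_finVec_inl hYmeas hY'meas) hℓmeas (by simp) hℓM
  filter_upwards [hD] with ω hω
  refine squeeze_zero (fun n => ?_) (fun n => ?_) (by simpa only [mul_zero] using hω.const_mul 2)
  all_goals obtain ⟨j, hj, hmbar⟩ := hmem (n + 1) ω n.succ_pos
  · rw [hmbar, sub_nonneg]
    exact Finset.inf'_le _ (Finset.mem_range.2 hj)
  · rw [hmbar]
    refine sub_inf'_le_two_mul_sup'_abs_sub _ (f := fun i => ∫ z, ℓ z (Y'seq i ω) ∂μ)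
      (g := fun i => (∑ k ∈ Finset.range (n + 1), ℓ (Yseq k ω) (Y'seq i ω)) / (n + 1 : ℕ))
      (Finset.mem_range.2 hj) fun i hi => ?_
    exact div_le_div_of_nonneg_right (hmbar ▸ hminz (n + 1) ω n.succ_pos i (Finset.mem_range.1 hi))
      (Nat.cast_nonneg _)

/-- Almost-sure vanishing of the estimation error of the quantized
Fréchet mean estimator: with `Y₁, Y₂, …` and `Y'₁, Y'₂, …` mutually independent i.i.d.
sequences with distribution `μ`, bounded measurable loss `0 ≤ ℓ ≤ L`, risk
`R(y) = E[ℓ(Y₁, y)]`, empirical risk `Rₙ(y) = (1/n)·Σ_{i=1}^n ℓ(Yᵢ, y)`, and `m̄ₙ` an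
element of `{Y'₁, …, Y'ₙ}` minimizing `Rₙ` over `{Y'₁, …, Y'ₙ}`, one has
`R(m̄ₙ) − min_{1 ≤ i ≤ n} R(Y'ᵢ) → 0` almost surely. -/
theorem estimation_error_tendsto_zero
    {Y : Type*} [MetricSpace Y] [TopologicalSpace.SeparableSpace Y]
    [MeasurableSpace Y] [BorelSpace Y]
    (μ : Measure Y) [IsProbabilityMeasure μ]
    {Ω : Type*} [MeasurableSpace Ω] (P : Measure Ω) [IsProbabilityMeasure P]
    (ℓ : Y → Y → ℝ) (hℓmeas : Measurable fun p : Y × Y => ℓ p.1 p.2)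
    (hℓ0 : ∀ y y', 0 ≤ ℓ y y') (L : ℝ) (hℓL : ∀ y y', ℓ y y' ≤ L)
    (Yseq Y'seq : ℕ → Ω → Y)
    (hYmeas : ∀ i, Measurable (Yseq i)) (hY'meas : ∀ i, Measurable (Y'seq i))
    (hYdist : ∀ i, Measure.map (Yseq i) P = μ)
    (hY'dist : ∀ i, Measure.map (Y'seq i) P = μ)
    (hindep : iIndepFun (Sum.elim Yseq Y'seq) P)
    (R : Y → ℝ) (hR : ∀ y, R y = ∫ z, ℓ z y ∂μ)
    (mbar : ℕ → Ω → Y)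
    (hmem : ∀ n (ω : Ω), 0 < n → ∃ i < n, mbar n ω = Y'seq i ω)
    (hminz : ∀ n (ω : Ω), 0 < n → ∀ i < n,
      ∑ j ∈ Finset.range n, ℓ (Yseq j ω) (mbar n ω)
        ≤ ∑ j ∈ Finset.range n, ℓ (Yseq j ω) (Y'seq i ω)) :
    ∀ᵐ ω ∂P, Tendsto
      (fun n => R (mbar (n + 1) ω) -
        (Finset.range (n + 1)).inf' Finset.nonempty_range_add_one fun i => R (Y'seq i ω))
      atTop (nhds 0) :=
  estimation_error_tendsto_zero_general μ P ℓ hℓmeas hℓ0 L hℓL Yseq Y'seq hYmeas hY'meas hYdist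
    hindep R hR mbar hmem hminz
end

section
/- Let (Y, ρ) be a separable metric space, μ a Borel probability measure on Y with support S, and ℓ : Y × Y → [0, ∞) measurable with ℓ ≤ L, satisfying |ℓ(y, y') − ℓ(y, y'')| ≤ c·ℓ(y', y'') for all y, y', y'' and a finite constant c, and ℓ(y, y') ≤ ρ(y, y')^α for some α > 0. Let Y'₁, Y'₂, … be i.i.d. with distribution μ, set R(y) = E[ℓ(Y'₁, y)], and suppose R attains its minimum over S. Then min_{1 ≤ i ≤ n} R(Y'_i) → min_{y ∈ S} R(y) almost surely as n → ∞. -/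
/-!
The conditions on `ℓ` give `|R y - R y'| ≤ c ℓ(y, y') ≤ c ρ(y, y')^α`, so `R` is continuous.
Almost surely every sample lies in the support `S`, so the running minimum stays above `R ỹ`.
Every ball around `ỹ ∈ S` has positive mass, so by the second Borel–Cantelli lemma the samples
almost surely enter each of the countably many balls of radius `1/(k+1)`; hence `ỹ` lies in the
closure of the sample, and continuity of `R` at `ỹ` pushes the running minimum down to `R ỹ`.
-/

open MeasureTheory ProbabilityTheory Filter

open Topology

lemma measureSupport_eq_support {Y : Type*} [MetricSpace Y] [MeasurableSpace Y]
    (μ : Measure Y) : measureSupport μ = μ.support := by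
  ext y
  exact Metric.nhds_basis_ball.mem_measureSupport.symm

lemma continuous_of_dist_le_mul_dist_rpow {X Z : Type*} [PseudoMetricSpace X]
    [PseudoMetricSpace Z] {f : X → Z} {C α : ℝ} (hα : 0 < α)
    (h : ∀ x y, dist (f x) (f y) ≤ C * dist x y ^ α) : Continuous f := by
  refine continuous_iff_continuousAt.2 fun x => tendsto_iff_dist_tendsto_zero.2 ?_
  have hbound : Tendsto (fun y => C * dist y x ^ α) (𝓝 x) (𝓝 0) := by
    have : ContinuousAt (fun y => C * dist y x ^ α) x := by fun_prop (disch := positivity)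
    simpa [Real.zero_rpow hα.ne'] using this.tendsto
  exact squeeze_zero (fun _ => dist_nonneg) (fun y => h y x) hbound

lemma dist_integral_le_of_forall_abs_sub_le {Y : Type*} [MeasurableSpace Y]
    {μ : Measure Y} [IsProbabilityMeasure μ] {f g : Y → ℝ} (hf : Integrable f μ)
    (hg : Integrable g μ) {C : ℝ} (h : ∀ z, |f z - g z| ≤ C) :
    dist (∫ z, f z ∂μ) (∫ z, g z ∂μ) ≤ C := by
  rw [Real.dist_eq, ← integral_sub hf hg]
  simpa using norm_integral_le_of_norm_le_const (μ := μ) (f := fun z => f z - g z)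
    (ae_of_all _ fun z => (Real.norm_eq_abs _).trans_le (h z))

lemma ae_frequently_mem_of_iIndepFun {Y Ω : Type*} [MeasurableSpace Y] [MeasurableSpace Ω]
    {μ : Measure Y} {P : Measure Ω} {X : ℕ → Ω → Y} (hmeas : ∀ i, Measurable (X i))
    (hdist : ∀ i, Measure.map (X i) P = μ) (hindep : iIndepFun X P) {B : Set Y}
    (hB : MeasurableSet B) (hμB : 0 < μ B) : ∀ᵐ ω ∂P, ∃ᶠ i in atTop, X i ω ∈ B := by
  have := hindep.isProbabilityMeasure
  have hPB (i : ℕ) : P (X i ⁻¹' B) = μ B := by rw [← hdist i, Measure.map_apply (hmeas i) hB]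
  have hsets : iIndepSet (fun i => X i ⁻¹' B) P :=
    ((iIndepFun_iff_iIndep _ _ _).1 hindep).iIndepSets'.iIndepSet_of_mem
      (fun i => comap_measurable (X i) hB) fun i => hmeas i hB
  have hsum : ∑' i, P (X i ⁻¹' B) = ⊤ := by
    simp only [hPB]
    exact ENNReal.tsum_const_eq_top_of_ne_zero hμB.ne'
  have hlimsup : limsup (fun i => X i ⁻¹' B) atTop ∈ ae P :=
    (mem_ae_iff_prob_eq_one (.measurableSet_limsup fun i => hmeas i hB)).2
      (measure_limsup_eq_one (fun i => hmeas i hB) hsets hsum)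
  filter_upwards [hlimsup] with ω hω
  exact mem_limsup_iff_frequently_mem.1 hω

section

variable {Y : Type*} [MetricSpace Y] [MeasurableSpace Y] {μ : Measure Y}
  {Ω : Type*} [MeasurableSpace Ω] {P : Measure Ω} {X : ℕ → Ω → Y}

lemma continuous_integral_loss [IsProbabilityMeasure μ] {ℓ : Y → Y → ℝ}
    (hℓmeas : Measurable fun p : Y × Y => ℓ p.1 p.2) (hℓ0 : ∀ y y', 0 ≤ ℓ y y') {L : ℝ}
    (hℓL : ∀ y y', ℓ y y' ≤ L) {c : ℝ} (htr : ∀ y y' y'', |ℓ y y' - ℓ y y''| ≤ c * ℓ y' y'')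
    {α : ℝ} (hα : 0 < α) (hlr : ∀ y y', ℓ y y' ≤ dist y y' ^ α) :
    Continuous fun y => ∫ z, ℓ z y ∂μ := by
  have hint (y : Y) : Integrable (fun z => ℓ z y) μ :=
    .of_bound (hℓmeas.of_uncurry_right).aestronglyMeasurable L
      (ae_of_all _ fun z => by simpa [abs_of_nonneg (hℓ0 z y)] using hℓL z y)
  refine continuous_of_dist_le_mul_dist_rpow (C := max c 0) hα fun y y' =>
    dist_integral_le_of_forall_abs_sub_le (hint y) (hint y') fun z => ?_
  -- `c` is only forced to be nonnegative when `ℓ` is not identically zero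
  calc |ℓ z y - ℓ z y'| ≤ c * ℓ y y' := htr z y y'
    _ ≤ max c 0 * ℓ y y' := by gcongr; exacts [hℓ0 y y', le_max_left c 0]
    _ ≤ max c 0 * dist y y' ^ α := by gcongr; exact hlr y y'

lemma ae_forall_mem_support [TopologicalSpace.SeparableSpace Y] [BorelSpace Y]
    (hmeas : ∀ i, Measurable (X i)) (hdist : ∀ i, Measure.map (X i) P = μ) :
    ∀ᵐ ω ∂P, ∀ i, X i ω ∈ μ.support :=
  ae_all_iff.2 fun i => ae_of_ae_map (hmeas i).aemeasurable (hdist i ▸ Measure.support_mem_ae)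

lemma ae_mem_closure_range_of_mem_support [OpensMeasurableSpace Y]
    (hmeas : ∀ i, Measurable (X i)) (hdist : ∀ i, Measure.map (X i) P = μ)
    (hindep : iIndepFun X P) {y : Y} (hy : y ∈ μ.support) :
    ∀ᵐ ω ∂P, y ∈ closure (Set.range fun i => X i ω) := by
  have hhit (k : ℕ) : ∀ᵐ ω ∂P, ∃ i, X i ω ∈ Metric.ball y (1 / (k + 1)) :=
    (ae_frequently_mem_of_iIndepFun hmeas hdist hindep measurableSet_ball
      (Metric.nhds_basis_ball.mem_measureSupport.1 hy _ Nat.one_div_pos_of_nat)).mono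
      fun _ h => h.exists
  filter_upwards [ae_all_iff.2 hhit] with ω hω
  refine Metric.mem_closure_iff.2 fun ε hε => ?_
  obtain ⟨k, hk⟩ := exists_nat_one_div_lt hε
  obtain ⟨i, hi⟩ := hω k
  exact ⟨X i ω, Set.mem_range_self i, (dist_comm _ _).trans_lt (hi.trans hk)⟩

end

lemma tendsto_inf'_range_of_mem_closure {Y β : Type*} [TopologicalSpace Y] [LinearOrder β]
    [TopologicalSpace β] [OrderTopology β] {f : Y → β} {x : ℕ → Y} {y : Y}
    (hf : ContinuousAt f y) (hy : y ∈ closure (Set.range x)) (hmin : ∀ i, f y ≤ f (x i)) :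
    Tendsto (fun n => (Finset.range (n + 1)).inf' Finset.nonempty_range_add_one (f ∘ x))
      atTop (𝓝 (f y)) := by
  refine tendsto_order.2 ⟨fun b hb => .of_forall fun n => ?_, fun b hb => ?_⟩
  · exact hb.trans_le (Finset.le_inf' _ _ fun i _ => hmin i)
  · obtain ⟨_, hlt, i, rfl⟩ :=
      mem_closure_iff_nhds.1 hy _ (hf.preimage_mem_nhds (Iio_mem_nhds hb))
    filter_upwards [eventually_ge_atTop i] with n hn
    exact (Finset.inf'_le _ (Finset.mem_range_succ_iff.2 hn)).trans_lt hlt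

theorem min_risk_over_sample_tendsto_min_over_support_general
    {Y : Type*} [MetricSpace Y] [TopologicalSpace.SeparableSpace Y]
    [MeasurableSpace Y] [BorelSpace Y]
    (μ : Measure Y) [IsProbabilityMeasure μ]
    {Ω : Type*} [MeasurableSpace Ω] (P : Measure Ω)
    (ℓ : Y → Y → ℝ) (hℓmeas : Measurable fun p : Y × Y => ℓ p.1 p.2)
    (hℓ0 : ∀ y y', 0 ≤ ℓ y y') (L : ℝ) (hℓL : ∀ y y', ℓ y y' ≤ L)
    (c : ℝ) (htr : ∀ y y' y'', |ℓ y y' - ℓ y y''| ≤ c * ℓ y' y'')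
    (α : ℝ) (hα : 0 < α) (hlr : ∀ y y', ℓ y y' ≤ dist y y' ^ α)
    (Y' : ℕ → Ω → Y) (hmeas : ∀ i, Measurable (Y' i))
    (hdist : ∀ i, Measure.map (Y' i) P = μ)
    (hindep : iIndepFun Y' P)
    (R : Y → ℝ) (hR : ∀ y, R y = ∫ z, ℓ z y ∂μ)
    (ytil : Y) (hytil : ytil ∈ measureSupport μ)
    (hmin : ∀ y ∈ measureSupport μ, R ytil ≤ R y) :
    ∀ᵐ ω ∂P, Tendsto
      (fun n => (Finset.range (n + 1)).inf' Finset.nonempty_range_add_one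
        fun i => R (Y' i ω))
      atTop (nhds (R ytil)) := by
  rw [measureSupport_eq_support] at hytil hmin
  have hRcont : Continuous R := by
    rw [funext hR]
    exact continuous_integral_loss hℓmeas hℓ0 hℓL htr hα hlr
  filter_upwards [ae_forall_mem_support hmeas hdist,
    ae_mem_closure_range_of_mem_support hmeas hdist hindep hytil] with ω hsupp hclosure
  exact tendsto_inf'_range_of_mem_closure hRcont.continuousAt hclosure fun i => hmin _ (hsupp i)

/-- Almost-sure vanishing of the approximation error of the quantized
Fréchet mean estimator: if `Y'₁, Y'₂, …` are i.i.d. with distribution `μ`, the bounded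
loss satisfies conditions (tr) and (lr), `R(y) = E[ℓ(Y'₁, y)]`, and `R` attains its
minimum over the support `S` at `ỹ ∈ S`, then
`min_{1 ≤ i ≤ n} R(Y'ᵢ) → min_{y ∈ S} R(y)` almost surely. -/
theorem min_risk_over_sample_tendsto_min_over_support
    {Y : Type*} [MetricSpace Y] [TopologicalSpace.SeparableSpace Y]
    [MeasurableSpace Y] [BorelSpace Y]
    (μ : Measure Y) [IsProbabilityMeasure μ]
    {Ω : Type*} [MeasurableSpace Ω] (P : Measure Ω) [IsProbabilityMeasure P]
    (ℓ : Y → Y → ℝ) (hℓmeas : Measurable fun p : Y × Y => ℓ p.1 p.2)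
    (hℓ0 : ∀ y y', 0 ≤ ℓ y y') (L : ℝ) (hℓL : ∀ y y', ℓ y y' ≤ L)
    (c : ℝ) (htr : ∀ y y' y'', |ℓ y y' - ℓ y y''| ≤ c * ℓ y' y'')
    (α : ℝ) (hα : 0 < α) (hlr : ∀ y y', ℓ y y' ≤ dist y y' ^ α)
    (Y' : ℕ → Ω → Y) (hmeas : ∀ i, Measurable (Y' i))
    (hdist : ∀ i, Measure.map (Y' i) P = μ)
    (hindep : iIndepFun Y' P)
    (R : Y → ℝ) (hR : ∀ y, R y = ∫ z, ℓ z y ∂μ)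
    (ytil : Y) (hytil : ytil ∈ measureSupport μ)
    (hmin : ∀ y ∈ measureSupport μ, R ytil ≤ R y) :
    ∀ᵐ ω ∂P, Tendsto
      (fun n => (Finset.range (n + 1)).inf' Finset.nonempty_range_add_one
        fun i => R (Y' i ω))
      atTop (nhds (R ytil)) :=
  min_risk_over_sample_tendsto_min_over_support_general μ P ℓ hℓmeas hℓ0 L hℓL c htr α hα hlr Y'
    hmeas hdist hindep R hR ytil hytil hmin
end

section
/- Let (Y, ρ) be a separable metric space, μ a Borel probability measure on Y with support S, and Y'₁, Y'₂, … i.i.d. random elements with distribution μ. Then for every y ∈ S, min_{1 ≤ i ≤ n} ρ(Y'_i, y) → 0 almost surely as n → ∞; that is, the nearest neighbor of y among Y'₁, …, Y'ₙ converges to y almost surely. -/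
/-!
Every ball around a point `y` of the support has positive mass, so the independent events
`Y'ᵢ ∈ ball y ε` have divergent probability sum and, by the second Borel–Cantelli lemma, almost
surely infinitely many of them occur. Intersecting over the countably many radii `1 / (k + 1)`,
almost surely the sample comes arbitrarily close to `y`, which is all the nonnegative running
minimum of the distances needs to tend to `0`.
-/

open MeasureTheory ProbabilityTheory Filter

section Independence

variable {Ω β : Type*} [MeasurableSpace Ω] [MeasurableSpace β] {P : Measure Ω}

lemma ProbabilityTheory.iIndepFun.iIndepSet_preimage {ι : Type*} {X : ι → Ω → β}
    (hindep : iIndepFun X P) {s : Set β} (hs : MeasurableSet s) :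
    iIndepSet (fun i => X i ⁻¹' s) P :=
  (iIndepSet_iff_iIndep _ _).2 <| iIndep_of_iIndep_of_le ((iIndepFun_iff_iIndep _ _ _).1 hindep)
    fun _ => MeasurableSpace.generateFrom_le <| by rintro _ rfl; exact ⟨s, hs, rfl⟩

variable {X : ℕ → Ω → β}

theorem ae_frequently_mem_of_iIndepFun_s14 (hX : ∀ i, Measurable (X i)) (hindep : iIndepFun X P)
    {s : Set β} (hs : MeasurableSet s) (hsum : ∑' i, P (X i ⁻¹' s) = ⊤) :
    ∀ᵐ ω ∂P, ∃ᶠ i in atTop, X i ω ∈ s := by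
  have := hindep.isProbabilityMeasure
  have hlimsup := measure_limsup_eq_one (fun i => hX i hs) (hindep.iIndepSet_preimage hs) hsum
  filter_upwards [(mem_ae_iff_prob_eq_one (.measurableSet_limsup fun i => hX i hs)).2 hlimsup]
    with ω hω
  exact mem_limsup_iff_frequently_mem.1 hω

theorem ae_frequently_mem_of_iIndepFun_of_map_eq {μ : Measure β} (hX : ∀ i, Measurable (X i))
    (hindep : iIndepFun X P) (hdist : ∀ i, P.map (X i) = μ) {s : Set β} (hs : MeasurableSet s)
    (hμs : μ s ≠ 0) :
    ∀ᵐ ω ∂P, ∃ᶠ i in atTop, X i ω ∈ s := by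
  refine ae_frequently_mem_of_iIndepFun_s14 hX hindep hs ?_
  simp_rw [← Measure.map_apply (hX _) hs, hdist]
  exact ENNReal.tsum_const_eq_top_of_ne_zero hμs

end Independence

theorem tendsto_inf'_range_of_forall_exists_lt {α : Type*} [LinearOrder α] [TopologicalSpace α]
    [OrderTopology α] {f : ℕ → α} {a : α} (hle : ∀ i, a ≤ f i)
    (hlt : ∀ b, a < b → ∃ i, f i < b) :
    Tendsto (fun n => (Finset.range (n + 1)).inf' Finset.nonempty_range_add_one f) atTop
      (nhds a) := by
  refine tendsto_order.2 ⟨fun b hb => Eventually.of_forall fun n =>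
    hb.trans_le (Finset.le_inf' _ _ fun i _ => hle i), fun b hb => ?_⟩
  obtain ⟨i, hi⟩ := hlt b hb
  filter_upwards [eventually_ge_atTop i] with n hn
  exact (Finset.inf'_le f (Finset.mem_range_succ_iff.2 hn)).trans_lt hi

theorem nearest_neighbor_dist_tendsto_zero_general
    {Y : Type*} [MetricSpace Y]
    [MeasurableSpace Y] [BorelSpace Y]
    (μ : Measure Y)
    {Ω : Type*} [MeasurableSpace Ω] (P : Measure Ω)
    (Y' : ℕ → Ω → Y) (hmeas : ∀ i, Measurable (Y' i))
    (hdist : ∀ i, Measure.map (Y' i) P = μ)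
    (hindep : iIndepFun Y' P) :
    ∀ y ∈ measureSupport μ,
      ∀ᵐ ω ∂P, Tendsto
        (fun n => (Finset.range (n + 1)).inf' Finset.nonempty_range_add_one
          fun i => dist (Y' i ω) y)
        atTop (nhds 0) := by
  intro y hy
  have hclose : ∀ᵐ ω ∂P, ∀ k : ℕ, ∃ i, dist (Y' i ω) y < 1 / (k + 1) :=
    ae_all_iff.2 fun k =>
      (ae_frequently_mem_of_iIndepFun_of_map_eq hmeas hindep hdist Metric.isOpen_ball.measurableSet
        (hy _ Nat.one_div_pos_of_nat).ne').mono fun _ hω => hω.exists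
  filter_upwards [hclose] with ω hω
  refine tendsto_inf'_range_of_forall_exists_lt (fun _ => dist_nonneg) fun ε hε => ?_
  obtain ⟨k, hk⟩ := exists_nat_one_div_lt hε
  exact (hω k).imp fun _ hi => hi.trans hk

/-- **Cover–Hart lemma.** If `Y'₁, Y'₂, …` are i.i.d. with distribution `μ`
on a separable metric space, then for every `y` in the support of `μ`, the distance from
`y` to its nearest neighbor among `Y'₁, …, Y'ₙ` converges to `0` almost surely. -/
theorem nearest_neighbor_dist_tendsto_zero
    {Y : Type*} [MetricSpace Y] [TopologicalSpace.SeparableSpace Y]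
    [MeasurableSpace Y] [BorelSpace Y]
    (μ : Measure Y) [IsProbabilityMeasure μ]
    {Ω : Type*} [MeasurableSpace Ω] (P : Measure Ω) [IsProbabilityMeasure P]
    (Y' : ℕ → Ω → Y) (hmeas : ∀ i, Measurable (Y' i))
    (hdist : ∀ i, Measure.map (Y' i) P = μ)
    (hindep : iIndepFun Y' P) :
    ∀ y ∈ measureSupport μ,
      ∀ᵐ ω ∂P, Tendsto
        (fun n => (Finset.range (n + 1)).inf' Finset.nonempty_range_add_one
          fun i => dist (Y' i ω) y)
        atTop (nhds 0) :=
  nearest_neighbor_dist_tendsto_zero_general μ P Y' hmeas hdist hindep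
end
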